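/- arXiv:2002.02657 — 9 statements merged into one kernel-verified Lean document; each statement's English description precedes it below -/
import Mathlib

section
/- Let y ∈ ℝⁿ be fixed and C > 0. Then the dissimilarity function x ↦ T(x,y) is quasiconvex on the half-space H = {x ∈ ℝⁿ : xᵀy ≥ −C/2}; that is, for all x, w ∈ H and all t ∈ [0,1], T(tx+(1−t)w, y) ≤ max{T(x,y), T(w,y)}. -/
open scoped InnerProductSpace

/-- The SSIM dissimilarity `T(x,y) = ‖x-y‖² / (‖x‖² + ‖y‖² + C)` is quasiconvex on the
half-space `{x | ⟪x, y⟫ ≥ -C/2}`. -/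
theorem T_quasiconvex_on_halfspace {n : ℕ} (y : EuclideanSpace ℝ (Fin n)) (C : ℝ) (hC : 0 < C)
    (x w : EuclideanSpace ℝ (Fin n))
    (hx : ⟪x, y⟫_ℝ ≥ -C / 2) (hw : ⟪w, y⟫_ℝ ≥ -C / 2)
    (t : ℝ) (ht : t ∈ Set.Icc (0 : ℝ) 1) :
    ‖t • x + (1 - t) • w - y‖ ^ 2 / (‖t • x + (1 - t) • w‖ ^ 2 + ‖y‖ ^ 2 + C)
      ≤ max (‖x - y‖ ^ 2 / (‖x‖ ^ 2 + ‖y‖ ^ 2 + C))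
            (‖w - y‖ ^ 2 / (‖w‖ ^ 2 + ‖y‖ ^ 2 + C)) := by
  obtain ⟨ht0, ht1⟩ := ht
  set z : EuclideanSpace ℝ (Fin n) := t • x + (1 - t) • w with hz
  set M : ℝ := max (‖x - y‖ ^ 2 / (‖x‖ ^ 2 + ‖y‖ ^ 2 + C))
            (‖w - y‖ ^ 2 / (‖w‖ ^ 2 + ‖y‖ ^ 2 + C)) with hM
  have Dx : (0:ℝ) < ‖x‖ ^ 2 + ‖y‖ ^ 2 + C := by positivity
  have Dw : (0:ℝ) < ‖w‖ ^ 2 + ‖y‖ ^ 2 + C := by positivity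
  have Dz : (0:ℝ) < ‖z‖ ^ 2 + ‖y‖ ^ 2 + C := by positivity
  -- expansions
  have exy : ‖x - y‖ ^ 2 = ‖x‖ ^ 2 - 2 * ⟪x, y⟫_ℝ + ‖y‖ ^ 2 := norm_sub_sq_real x y
  have ewy : ‖w - y‖ ^ 2 = ‖w‖ ^ 2 - 2 * ⟪w, y⟫_ℝ + ‖y‖ ^ 2 := norm_sub_sq_real w y
  have ezy : ‖z - y‖ ^ 2 = ‖z‖ ^ 2 - 2 * ⟪z, y⟫_ℝ + ‖y‖ ^ 2 := norm_sub_sq_real z y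
  have izy : ⟪z, y⟫_ℝ = t * ⟪x, y⟫_ℝ + (1 - t) * ⟪w, y⟫_ℝ := by
    rw [hz, inner_add_left, real_inner_smul_left, real_inner_smul_left]
  -- convexity of the squared norm
  have hconv : ‖z‖ ^ 2 ≤ t * ‖x‖ ^ 2 + (1 - t) * ‖w‖ ^ 2 := by
    have hzz : ‖z‖ ^ 2 = t ^ 2 * ‖x‖ ^ 2 + 2 * (t * (1 - t)) * ⟪x, w⟫_ℝ
        + (1 - t) ^ 2 * ‖w‖ ^ 2 := by
      rw [hz, norm_add_sq_real, norm_smul, norm_smul, real_inner_smul_left,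
        real_inner_smul_right]
      simp [abs_of_nonneg ht0, abs_of_nonneg (by linarith : (0:ℝ) ≤ 1 - t)]
      ring
    have hxw : ⟪x, w⟫_ℝ ≤ ‖x‖ * ‖w‖ := real_inner_le_norm x w
    nlinarith [sq_nonneg (‖x‖ - ‖w‖), mul_nonneg ht0 (by linarith : (0:ℝ) ≤ 1 - t),
      sq_nonneg (‖x‖ + ‖w‖)]
  -- positivity of numerators 2⟪·,y⟫+C
  have hx' : 0 ≤ 2 * ⟪x, y⟫_ℝ + C := by linarith
  have hw' : 0 ≤ 2 * ⟪w, y⟫_ℝ + C := by linarith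
  -- M bounds
  have h1 : ‖x - y‖ ^ 2 ≤ M * (‖x‖ ^ 2 + ‖y‖ ^ 2 + C) := by
    rw [← div_le_iff₀ Dx]; exact le_max_left _ _
  have h2 : ‖w - y‖ ^ 2 ≤ M * (‖w‖ ^ 2 + ‖y‖ ^ 2 + C) := by
    rw [← div_le_iff₀ Dw]; exact le_max_right _ _
  have hM1 : M ≤ 1 := by
    apply max_le
    · rw [div_le_one Dx]; linarith
    · rw [div_le_one Dw]; linarith
  rw [div_le_iff₀ Dz]
  rw [ezy, izy]
  nlinarith [mul_nonneg ht0 hx', mul_nonneg (by linarith : (0:ℝ) ≤ 1 - t) hw',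
    mul_nonneg (by linarith : (0:ℝ) ≤ 1 - M) (le_of_lt Dz),
    mul_le_mul_of_nonneg_left hconv (by linarith : (0:ℝ) ≤ 1 - M),
    mul_nonneg ht0 (sub_nonneg.2 h1), mul_nonneg (by linarith : (0:ℝ) ≤ 1 - t) (sub_nonneg.2 h2),
    h1, h2, exy, ewy]
end

section
/- Let y ∈ ℝⁿ be fixed and C > 0. Then the function x ↦ SSIM(x,y) is quasiconcave on the half-space H = {x ∈ ℝⁿ : xᵀy ≥ −C/2}; that is, for all x, w ∈ H and all t ∈ [0,1], SSIM(tx+(1−t)w, y) ≥ min{SSIM(x,y), SSIM(w,y)}. -/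
open scoped InnerProductSpace

/-- The SSIM `SSIM(x,y) = (2⟪x,y⟫ + C) / (‖x‖² + ‖y‖² + C)` is quasiconcave on the
half-space `{x | ⟪x, y⟫ ≥ -C/2}`. -/
theorem ssim_quasiconcave_on_halfspace {n : ℕ} (y : EuclideanSpace ℝ (Fin n)) (C : ℝ)
    (hC : 0 < C) (x w : EuclideanSpace ℝ (Fin n))
    (hx : ⟪x, y⟫_ℝ ≥ -C / 2) (hw : ⟪w, y⟫_ℝ ≥ -C / 2)
    (t : ℝ) (ht : t ∈ Set.Icc (0 : ℝ) 1) :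
    (2 * ⟪t • x + (1 - t) • w, y⟫_ℝ + C) / (‖t • x + (1 - t) • w‖ ^ 2 + ‖y‖ ^ 2 + C)
      ≥ min ((2 * ⟪x, y⟫_ℝ + C) / (‖x‖ ^ 2 + ‖y‖ ^ 2 + C))
            ((2 * ⟪w, y⟫_ℝ + C) / (‖w‖ ^ 2 + ‖y‖ ^ 2 + C)) := by
  obtain ⟨ht0, ht1⟩ := ht
  set z := t • x + (1 - t) • w with hz
  have hd1 : (0:ℝ) < ‖x‖ ^ 2 + ‖y‖ ^ 2 + C := by positivity
  have hd2 : (0:ℝ) < ‖w‖ ^ 2 + ‖y‖ ^ 2 + C := by positivity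
  have hdz : (0:ℝ) < ‖z‖ ^ 2 + ‖y‖ ^ 2 + C := by positivity
  set m := min ((2 * ⟪x, y⟫_ℝ + C) / (‖x‖ ^ 2 + ‖y‖ ^ 2 + C))
      ((2 * ⟪w, y⟫_ℝ + C) / (‖w‖ ^ 2 + ‖y‖ ^ 2 + C)) with hm
  have hm0 : 0 ≤ m := by
    apply le_min
    · apply div_nonneg _ hd1.le; linarith
    · apply div_nonneg _ hd2.le; linarith
  have h1 : m * (‖x‖ ^ 2 + ‖y‖ ^ 2 + C) ≤ 2 * ⟪x, y⟫_ℝ + C := by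
    have := min_le_left ((2 * ⟪x, y⟫_ℝ + C) / (‖x‖ ^ 2 + ‖y‖ ^ 2 + C))
      ((2 * ⟪w, y⟫_ℝ + C) / (‖w‖ ^ 2 + ‖y‖ ^ 2 + C))
    rw [← hm] at this
    exact (le_div_iff₀ hd1).mp this
  have h2 : m * (‖w‖ ^ 2 + ‖y‖ ^ 2 + C) ≤ 2 * ⟪w, y⟫_ℝ + C := by
    have := min_le_right ((2 * ⟪x, y⟫_ℝ + C) / (‖x‖ ^ 2 + ‖y‖ ^ 2 + C))
      ((2 * ⟪w, y⟫_ℝ + C) / (‖w‖ ^ 2 + ‖y‖ ^ 2 + C))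
    rw [← hm] at this
    exact (le_div_iff₀ hd2).mp this
  have hinner : ⟪z, y⟫_ℝ = t * ⟪x, y⟫_ℝ + (1 - t) * ⟪w, y⟫_ℝ := by
    rw [hz, inner_add_left, real_inner_smul_left, real_inner_smul_left]
  have hnormz : ‖z‖ ^ 2 ≤ t * ‖x‖ ^ 2 + (1 - t) * ‖w‖ ^ 2 := by
    have hxw : ⟪x, w⟫_ℝ ≤ ‖x‖ * ‖w‖ := real_inner_le_norm x w
    have hexp : ‖z‖ ^ 2 = t ^ 2 * ‖x‖ ^ 2 + 2 * (t * (1 - t)) * ⟪x, w⟫_ℝ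
        + (1 - t) ^ 2 * ‖w‖ ^ 2 := by
      rw [hz, norm_add_sq_real, norm_smul, norm_smul, real_inner_smul_left,
        real_inner_smul_right, Real.norm_eq_abs, Real.norm_eq_abs, mul_pow, mul_pow,
        sq_abs, sq_abs]
      ring
    nlinarith [sq_nonneg (‖x‖ - ‖w‖), mul_nonneg ht0 (by linarith : (0:ℝ) ≤ 1 - t),
      sq_nonneg (‖x‖ + ‖w‖)]
  rw [ge_iff_le, le_div_iff₀ hdz]
  have key : m * (‖z‖ ^ 2 + ‖y‖ ^ 2 + C)
      ≤ m * (t * ‖x‖ ^ 2 + (1 - t) * ‖w‖ ^ 2 + ‖y‖ ^ 2 + C) := by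
    apply mul_le_mul_of_nonneg_left _ hm0
    linarith
  have key2 : m * (t * ‖x‖ ^ 2 + (1 - t) * ‖w‖ ^ 2 + ‖y‖ ^ 2 + C)
      ≤ 2 * ⟪z, y⟫_ℝ + C := by
    rw [hinner]
    nlinarith [mul_le_mul_of_nonneg_left h1 ht0,
      mul_le_mul_of_nonneg_left h2 (by linarith : (0:ℝ) ≤ 1 - t)]
  linarith
end

section
/- Let y ∈ ℝⁿ be fixed and C > 0. Then the dissimilarity function x ↦ T(x,y) is quasiconcave on the half-space H' = {x ∈ ℝⁿ : xᵀy ≤ −C/2}; that is, for all x, w ∈ H' and all t ∈ [0,1], T(tx+(1−t)w, y) ≥ min{T(x,y), T(w,y)}. -/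
open scoped InnerProductSpace

/-- Real-arithmetic core of the quasiconcavity argument. -/
lemma T_aux (a b yy p q zn zi C t : ℝ) (hC : 0 < C) (hyy : 0 ≤ yy)
    (ha : 0 ≤ a) (hb : 0 ≤ b) (ht0 : 0 ≤ t) (ht1 : t ≤ 1)
    (hp : 2 * p + C ≤ 0) (hq : 2 * q + C ≤ 0)
    (hzi : zi = t * p + (1 - t) * q)
    (hzn0 : 0 ≤ zn)
    (hzn : zn ≤ t * a + (1 - t) * b) :
    (zn - 2 * zi + yy) / (zn + yy + C)
      ≥ min ((a - 2 * p + yy) / (a + yy + C)) ((b - 2 * q + yy) / (b + yy + C)) := by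
  have hDx : 0 < a + yy + C := by linarith
  have hDw : 0 < b + yy + C := by linarith
  have hDz : 0 < zn + yy + C := by linarith
  set Dx := a + yy + C
  set Dw := b + yy + C
  set Dz := zn + yy + C
  set Nx := 2 * p + C with hNx
  set Nw := 2 * q + C with hNw
  set Nz := 2 * zi + C with hNzdef
  have hNz : Nz ≤ 0 := by
    have : Nz = t * Nx + (1 - t) * Nw := by rw [hNzdef, hNx, hNw, hzi]; ring
    rw [this]
    have h1 : t * Nx ≤ 0 := mul_nonpos_of_nonneg_of_nonpos ht0 hp
    have h2 : (1 - t) * Nw ≤ 0 := mul_nonpos_of_nonneg_of_nonpos (by linarith) hq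
    linarith
  set M := max (Nx / Dx) (Nw / Dw) with hM
  have hMx : Nx ≤ M * Dx := by
    have := le_max_left (Nx / Dx) (Nw / Dw)
    calc Nx = Nx / Dx * Dx := by field_simp
    _ ≤ M * Dx := mul_le_mul_of_nonneg_right this hDx.le
  have hMw : Nw ≤ M * Dw := by
    have := le_max_right (Nx / Dx) (Nw / Dw)
    calc Nw = Nw / Dw * Dw := by field_simp
    _ ≤ M * Dw := mul_le_mul_of_nonneg_right this hDw.le
  have hM0 : M ≤ 0 :=
    max_le (div_nonpos_of_nonpos_of_nonneg hp hDx.le)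
      (div_nonpos_of_nonpos_of_nonneg hq hDw.le)
  set S := t * Dx + (1 - t) * Dw with hS
  have hDzS : Dz ≤ S := by
    have h9 : S = t * a + (1 - t) * b + yy + C := by rw [hS]; ring
    rw [h9]; simp only [Dz]; linarith
  have hSpos : 0 < S := lt_of_lt_of_le hDz hDzS
  have hNzS : Nz ≤ M * S := by
    have h1 : Nz = t * Nx + (1 - t) * Nw := by rw [hNzdef, hNx, hNw, hzi]; ring
    have h2 : t * Nx ≤ t * (M * Dx) := mul_le_mul_of_nonneg_left hMx ht0
    have h3 : (1 - t) * Nw ≤ (1 - t) * (M * Dw) :=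
      mul_le_mul_of_nonneg_left hMw (by linarith)
    rw [h1, hS]; nlinarith
  -- Nz / Dz ≤ M
  have key : Nz / Dz ≤ M := by
    have h1 : Nz / Dz ≤ Nz / S := by
      rw [div_le_div_iff₀ hDz hSpos]
      nlinarith
    have h2 : Nz / S ≤ M := by
      rw [div_le_iff₀ hSpos]; linarith
    linarith
  -- rewrite everything as 1 - N/D
  have ez : (zn - 2 * zi + yy) / Dz = 1 - Nz / Dz := by
    field_simp [hNzdef]; simp only [Dz]; ring
  have ex : (a - 2 * p + yy) / Dx = 1 - Nx / Dx := by
    field_simp [hNx]; simp only [Dx]; ring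
  have ew : (b - 2 * q + yy) / Dw = 1 - Nw / Dw := by
    field_simp [hNw]; simp only [Dw]; ring
  rw [ez, ex, ew]
  rcases le_total (Nx / Dx) (Nw / Dw) with h | h
  · have hmax : M = Nw / Dw := max_eq_right h
    rw [hmax] at key
    have hmin : min (1 - Nx / Dx) (1 - Nw / Dw) = 1 - Nw / Dw :=
      min_eq_right (by linarith)
    rw [hmin]; linarith
  · have hmax : M = Nx / Dx := max_eq_left h
    rw [hmax] at key
    have hmin : min (1 - Nx / Dx) (1 - Nw / Dw) = 1 - Nx / Dx :=
      min_eq_left (by linarith)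
    rw [hmin]; linarith

/-- The SSIM dissimilarity `T(x,y) = ‖x-y‖² / (‖x‖² + ‖y‖² + C)` is quasiconcave on the
half-space `{x | ⟪x, y⟫ ≤ -C/2}`. -/
theorem T_quasiconcave_on_halfspace {n : ℕ} (y : EuclideanSpace ℝ (Fin n)) (C : ℝ) (hC : 0 < C)
    (x w : EuclideanSpace ℝ (Fin n))
    (hx : ⟪x, y⟫_ℝ ≤ -C / 2) (hw : ⟪w, y⟫_ℝ ≤ -C / 2)
    (t : ℝ) (ht : t ∈ Set.Icc (0 : ℝ) 1) :
    ‖t • x + (1 - t) • w - y‖ ^ 2 / (‖t • x + (1 - t) • w‖ ^ 2 + ‖y‖ ^ 2 + C)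
      ≥ min (‖x - y‖ ^ 2 / (‖x‖ ^ 2 + ‖y‖ ^ 2 + C))
            (‖w - y‖ ^ 2 / (‖w‖ ^ 2 + ‖y‖ ^ 2 + C)) := by
  obtain ⟨ht0, ht1⟩ := ht
  set z := t • x + (1 - t) • w with hz
  have hzy : ⟪z, y⟫_ℝ = t * ⟪x, y⟫_ℝ + (1 - t) * ⟪w, y⟫_ℝ := by
    rw [hz, inner_add_left, real_inner_smul_left, real_inner_smul_left]
  have hnormz : ‖z‖ ^ 2 ≤ t * ‖x‖ ^ 2 + (1 - t) * ‖w‖ ^ 2 := by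
    have h1 : ‖z‖ ^ 2 = ‖t • x‖ ^ 2 + 2 * ⟪t • x, (1 - t) • w⟫_ℝ + ‖(1 - t) • w‖ ^ 2 := by
      rw [hz]; exact norm_add_sq_real _ _
    have h2 : ⟪t • x, (1 - t) • w⟫_ℝ = t * (1 - t) * ⟪x, w⟫_ℝ := by
      rw [real_inner_smul_left, real_inner_smul_right]; ring
    have h3 : ‖t • x‖ ^ 2 = t ^ 2 * ‖x‖ ^ 2 := by
      rw [norm_smul]; simp [mul_pow, sq_abs]
    have h4 : ‖(1 - t) • w‖ ^ 2 = (1 - t) ^ 2 * ‖w‖ ^ 2 := by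
      rw [norm_smul]; simp [mul_pow, sq_abs]
    have h5 : ⟪x, w⟫_ℝ ≤ ‖x‖ * ‖w‖ := real_inner_le_norm x w
    nlinarith [sq_nonneg (‖x‖ - ‖w‖), mul_nonneg ht0 (show (0:ℝ) ≤ 1 - t by linarith),
      norm_nonneg x, norm_nonneg w]
  have hzy2 : ‖z - y‖ ^ 2 = ‖z‖ ^ 2 - 2 * ⟪z, y⟫_ℝ + ‖y‖ ^ 2 := norm_sub_sq_real z y
  have hxy2 : ‖x - y‖ ^ 2 = ‖x‖ ^ 2 - 2 * ⟪x, y⟫_ℝ + ‖y‖ ^ 2 := norm_sub_sq_real x y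
  have hwy2 : ‖w - y‖ ^ 2 = ‖w‖ ^ 2 - 2 * ⟪w, y⟫_ℝ + ‖y‖ ^ 2 := norm_sub_sq_real w y
  have goal := T_aux (‖x‖ ^ 2) (‖w‖ ^ 2) (‖y‖ ^ 2) (⟪x, y⟫_ℝ) (⟪w, y⟫_ℝ)
    (‖z‖ ^ 2) (⟪z, y⟫_ℝ) C t hC (sq_nonneg _) (sq_nonneg _) (sq_nonneg _)
    ht0 ht1 (by linarith) (by linarith) hzy (sq_nonneg _) hnormz
  rw [hzy2, hxy2, hwy2]
  convert goal using 3
end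

section
/- Let y ∈ ℝⁿ be fixed and C > 0. Then the function x ↦ SSIM(x,y) is quasiconvex on the half-space H' = {x ∈ ℝⁿ : xᵀy ≤ −C/2}; that is, for all x, w ∈ H' and all t ∈ [0,1], SSIM(tx+(1−t)w, y) ≤ max{SSIM(x,y), SSIM(w,y)}. -/
open scoped InnerProductSpace

/-- The SSIM `SSIM(x,y) = (2⟪x,y⟫ + C) / (‖x‖² + ‖y‖² + C)` is quasiconvex on the
half-space `{x | ⟪x, y⟫ ≤ -C/2}`. -/
theorem ssim_quasiconvex_on_halfspace {n : ℕ} (y : EuclideanSpace ℝ (Fin n)) (C : ℝ)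
    (hC : 0 < C) (x w : EuclideanSpace ℝ (Fin n))
    (hx : ⟪x, y⟫_ℝ ≤ -C / 2) (hw : ⟪w, y⟫_ℝ ≤ -C / 2)
    (t : ℝ) (ht : t ∈ Set.Icc (0 : ℝ) 1) :
    (2 * ⟪t • x + (1 - t) • w, y⟫_ℝ + C) / (‖t • x + (1 - t) • w‖ ^ 2 + ‖y‖ ^ 2 + C)
      ≤ max ((2 * ⟪x, y⟫_ℝ + C) / (‖x‖ ^ 2 + ‖y‖ ^ 2 + C))
            ((2 * ⟪w, y⟫_ℝ + C) / (‖w‖ ^ 2 + ‖y‖ ^ 2 + C)) := by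
  obtain ⟨ht0, ht1⟩ := ht
  set z := t • x + (1 - t) • w with hz
  have hDx : (0:ℝ) < ‖x‖ ^ 2 + ‖y‖ ^ 2 + C := by positivity
  have hDw : (0:ℝ) < ‖w‖ ^ 2 + ‖y‖ ^ 2 + C := by positivity
  have hDz : (0:ℝ) < ‖z‖ ^ 2 + ‖y‖ ^ 2 + C := by positivity
  set m := max ((2 * ⟪x, y⟫_ℝ + C) / (‖x‖ ^ 2 + ‖y‖ ^ 2 + C))
            ((2 * ⟪w, y⟫_ℝ + C) / (‖w‖ ^ 2 + ‖y‖ ^ 2 + C)) with hm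
  have hm0 : m ≤ 0 := by
    apply max_le
    · exact div_nonpos_iff.mpr (Or.inr ⟨by linarith, hDx.le⟩)
    · exact div_nonpos_iff.mpr (Or.inr ⟨by linarith, hDw.le⟩)
  have hax : 2 * ⟪x, y⟫_ℝ + C ≤ m * (‖x‖ ^ 2 + ‖y‖ ^ 2 + C) :=
    (div_le_iff₀ hDx).mp (le_max_left _ _)
  have haw : 2 * ⟪w, y⟫_ℝ + C ≤ m * (‖w‖ ^ 2 + ‖y‖ ^ 2 + C) :=
    (div_le_iff₀ hDw).mp (le_max_right _ _)
  have hNz : ⟪z, y⟫_ℝ = t * ⟪x, y⟫_ℝ + (1 - t) * ⟪w, y⟫_ℝ := by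
    simp [hz, inner_add_left, real_inner_smul_left, Finset.mul_sum, mul_assoc]
  have hnorm : ‖z‖ ≤ t * ‖x‖ + (1 - t) * ‖w‖ := by
    calc ‖z‖ ≤ ‖t • x‖ + ‖(1 - t) • w‖ := norm_add_le _ _
    _ = t * ‖x‖ + (1 - t) * ‖w‖ := by
        rw [norm_smul, norm_smul, Real.norm_eq_abs, Real.norm_eq_abs,
          abs_of_nonneg ht0, abs_of_nonneg (by linarith)]
  have hDzle : ‖z‖ ^ 2 ≤ t * ‖x‖ ^ 2 + (1 - t) * ‖w‖ ^ 2 := by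
    nlinarith [norm_nonneg z, norm_nonneg x, norm_nonneg w, sq_nonneg (‖x‖ - ‖w‖),
      mul_nonneg ht0 (sub_nonneg.mpr ht1)]
  rw [div_le_iff₀ hDz, hNz]
  nlinarith [
    mul_le_mul_of_nonpos_left (by nlinarith : ‖z‖ ^ 2 + ‖y‖ ^ 2 + C ≤ t * (‖x‖ ^ 2 + ‖y‖ ^ 2 + C) + (1 - t) * (‖w‖ ^ 2 + ‖y‖ ^ 2 + C)) hm0,
    mul_le_mul_of_nonneg_left hax ht0, mul_le_mul_of_nonneg_left haw (sub_nonneg.mpr ht1)]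
end

section
/- Let Φ ∈ ℝ^{m×n}, let y ∈ ℝᵐ with y ≠ 0, let z ∈ ℝⁿ and λ > 0, and define f as below (with C = 0). Then the Jacobian J_f of f is Lipschitz continuous on every bounded open convex set Ω ⊂ ℝⁿ; moreover there exist constants C₁, C₂, C₃ > 0, depending only on Φ, y and Ω (not on λ or z), such that for all x, w ∈ Ω, ‖J_f(x) − J_f(w)‖_F ≤ (C₁‖ΦᵀΦ‖_F + λ(C₂‖z‖₂ + C₃)) ‖x − w‖₂, where ‖·‖_F denotes the Frobenius norm. -/
/-!
Write `f(x) = ΦᵀΦ (s(x) x) + λ (r(x) x - r(x) z) - Φᵀy`. Because `y ≠ 0`, `r` never vanishes, so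
`r`, `s`, `s · id` and `r · id` are `C²`, and their derivatives are Lipschitz on the bounded set
`Ω`, whose closure is compact. The derivative
`J_f(x) = ΦᵀΦ ∘ D(s · id)(x) + λ (D(r · id)(x) - Dr(x) ⊗ z)` is affine in `λ` and `z`, which gives
`‖J_f(x) - J_f(w)‖ ≤ (‖ΦᵀΦ‖ K₁ + λ (K₂ ‖z‖ + K₃)) ‖x - w‖` in operator norm. The operator norm of
`ΦᵀΦ` is at most its Frobenius norm, and the Frobenius norm of an `n`-column matrix is at most
`√n` times its operator norm.
-/
open Matrix Finset
open scoped NNReal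

section Lipschitz

variable {E F : Type*} [NormedAddCommGroup E] [NormedSpace ℝ E] [FiniteDimensional ℝ E]
  [NormedAddCommGroup F] [NormedSpace ℝ F]

theorem ContDiff.exists_lipschitzOnWith_of_isBounded {ψ : E → F} (hψ : ContDiff ℝ 1 ψ)
    {s : Set E} (hs : Bornology.IsBounded s) : ∃ K, LipschitzOnWith K ψ s := by
  obtain ⟨K, hK⟩ := hψ.locallyLipschitz.locallyLipschitzOn.exists_lipschitzOnWith_of_compact
    hs.isCompact_closure
  exact ⟨K, hK.mono subset_closure⟩

end Lipschitz

section Frobenius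

variable {ι κ : Type*} [Fintype ι] [Fintype κ] [DecidableEq ι]

theorem norm_toEuclideanLin_apply_le (M : Matrix κ ι ℝ) (x : EuclideanSpace ℝ ι) :
    ‖toEuclideanLin M x‖ ≤ √(∑ i, ∑ j, M i j ^ 2) * ‖x‖ := by
  rw [← Real.sqrt_sq (norm_nonneg x), ← Real.sqrt_mul (by positivity), EuclideanSpace.norm_eq]
  refine Real.sqrt_le_sqrt ?_
  rw [EuclideanSpace.norm_sq_eq, Finset.sum_mul]
  refine Finset.sum_le_sum fun i _ => ?_
  simpa [Matrix.toLpLin_apply, Matrix.mulVec, dotProduct, sq_abs] using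
    Finset.sum_mul_sq_le_sq_mul_sq Finset.univ (M i) x

theorem norm_toEuclideanLin_toContinuousLinearMap_le (M : Matrix κ ι ℝ) :
    ‖LinearMap.toContinuousLinearMap (toEuclideanLin M)‖ ≤ √(∑ i, ∑ j, M i j ^ 2) :=
  ContinuousLinearMap.opNorm_le_bound _ (Real.sqrt_nonneg _) (norm_toEuclideanLin_apply_le M)

theorem sqrt_sum_sq_toMatrix_le (L : EuclideanSpace ℝ ι →L[ℝ] EuclideanSpace ℝ κ) :
    √(∑ i, ∑ j, LinearMap.toMatrix (EuclideanSpace.basisFun ι ℝ).toBasis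
      (EuclideanSpace.basisFun κ ℝ).toBasis L i j ^ 2) ≤ √(Fintype.card ι) * ‖L‖ := by
  rw [← Real.sqrt_sq (norm_nonneg L), ← Real.sqrt_mul (by positivity)]
  refine Real.sqrt_le_sqrt ?_
  rw [Finset.sum_comm, ← Finset.card_univ, ← nsmul_eq_mul, ← Finset.sum_const]
  refine Finset.sum_le_sum fun j _ => ?_
  have hcol := L.le_opNorm (EuclideanSpace.single j 1)
  rw [PiLp.norm_single, norm_one, mul_one] at hcol
  simpa [LinearMap.toMatrix_apply, EuclideanSpace.norm_sq_eq, sq_abs] using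
    pow_le_pow_left₀ (norm_nonneg _) hcol 2

end Frobenius

section Derivative

variable {E F G : Type*} [NormedAddCommGroup E] [NormedSpace ℝ E]
  [NormedAddCommGroup F] [NormedSpace ℝ F] [NormedAddCommGroup G] [NormedSpace ℝ G]

theorem norm_fderiv_comp_add_smul_sub_le {h : E → F} {g : E → G} {r : E → ℝ}
    (A : F →L[ℝ] G) (lam : ℝ) (z c : G) (hh : Differentiable ℝ h) (hg : Differentiable ℝ g)
    (hr : Differentiable ℝ r) (x w : E) :
    ‖fderiv ℝ (fun u => A (h u) + lam • (g u - r u • z) - c) x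
        - fderiv ℝ (fun u => A (h u) + lam • (g u - r u • z) - c) w‖
      ≤ ‖A‖ * ‖fderiv ℝ h x - fderiv ℝ h w‖
        + |lam| * (‖fderiv ℝ g x - fderiv ℝ g w‖ + ‖fderiv ℝ r x - fderiv ℝ r w‖ * ‖z‖) := by
  have hD : ∀ u, fderiv ℝ (fun u => A (h u) + lam • (g u - r u • z) - c) u
      = A.comp (fderiv ℝ h u) + lam • (fderiv ℝ g u - (fderiv ℝ r u).smulRight z) := fun u =>
    (((A.hasFDerivAt.comp u (hh u).hasFDerivAt).add
      (((hg u).hasFDerivAt.sub ((hr u).hasFDerivAt.smul_const z)).const_smul lam)).sub_const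
      c).fderiv
  calc _ = ‖A.comp (fderiv ℝ h x - fderiv ℝ h w) + lam • ((fderiv ℝ g x - fderiv ℝ g w)
        - (fderiv ℝ r x - fderiv ℝ r w).smulRight z)‖ := by
        rw [hD, hD]
        congr 1
        ext v
        simp only [_root_.sub_apply, _root_.add_apply,
          ContinuousLinearMap.comp_apply, _root_.smul_apply,
          ContinuousLinearMap.smulRight_apply, map_sub, sub_smul, smul_sub]
        abel
    _ ≤ _ := by
      refine (norm_add_le _ _).trans (add_le_add (A.opNorm_comp_le _) ?_)
      rw [norm_smul, Real.norm_eq_abs, ← ContinuousLinearMap.norm_smulRight_apply]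
      gcongr
      exact norm_sub_le _ _

theorem exists_norm_fderiv_comp_add_smul_sub_le [FiniteDimensional ℝ E] {h : E → F} {g : E → G}
    {r : E → ℝ} (A : F →L[ℝ] G) (c : G) (hh : ContDiff ℝ 2 h) (hg : ContDiff ℝ 2 g)
    (hr : ContDiff ℝ 2 r) {Ω : Set E} (hΩ : Bornology.IsBounded Ω) :
    ∃ K₁ K₂ K₃ : ℝ≥0, ∀ (lam : ℝ) (z : G), ∀ x ∈ Ω, ∀ w ∈ Ω,
      ‖fderiv ℝ (fun u => A (h u) + lam • (g u - r u • z) - c) x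
          - fderiv ℝ (fun u => A (h u) + lam • (g u - r u • z) - c) w‖
        ≤ (‖A‖ * K₁ + |lam| * (K₂ * ‖z‖ + K₃)) * ‖x - w‖ := by
  obtain ⟨Kh, hKh⟩ := (hh.fderiv_right le_rfl).exists_lipschitzOnWith_of_isBounded hΩ
  obtain ⟨Kg, hKg⟩ := (hg.fderiv_right le_rfl).exists_lipschitzOnWith_of_isBounded hΩ
  obtain ⟨Kr, hKr⟩ := (hr.fderiv_right le_rfl).exists_lipschitzOnWith_of_isBounded hΩ
  refine ⟨Kh, Kr, Kg, fun lam z x hx w hw => ?_⟩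
  calc _ ≤ ‖A‖ * ‖fderiv ℝ h x - fderiv ℝ h w‖
        + |lam| * (‖fderiv ℝ g x - fderiv ℝ g w‖ + ‖fderiv ℝ r x - fderiv ℝ r w‖ * ‖z‖) :=
        norm_fderiv_comp_add_smul_sub_le A lam z c (hh.differentiable two_ne_zero)
          (hg.differentiable two_ne_zero) (hr.differentiable two_ne_zero) x w
    _ ≤ ‖A‖ * (Kh * ‖x - w‖) + |lam| * (Kg * ‖x - w‖ + Kr * ‖x - w‖ * ‖z‖) := by
      gcongr
      exacts [hKh.norm_sub_le hx hw, hKg.norm_sub_le hx hw, hKr.norm_sub_le hx hw]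
    _ = _ := by ring

end Derivative

section Smoothness

variable {E F : Type*} [NormedAddCommGroup E] [NormedSpace ℝ E]
  [NormedAddCommGroup F] [InnerProductSpace ℝ F]

theorem contDiff_norm_sub_sq_div_norm_sq_add_norm_sq {k : WithTop ℕ∞} (B : E →L[ℝ] F) {y : F}
    (hy : y ≠ 0) : ContDiff ℝ k fun x => ‖B x - y‖ ^ 2 / (‖B x‖ ^ 2 + ‖y‖ ^ 2) :=
  ((B.contDiff.sub contDiff_const).norm_sq ℝ).div ((B.contDiff.norm_sq ℝ).add contDiff_const)
    fun _ => (add_pos_of_nonneg_of_pos (sq_nonneg _) (pow_pos (norm_pos_iff.2 hy) 2)).ne'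

end Smoothness

theorem jacobian_lipschitz_general {m n : ℕ} (Φ : Matrix (Fin m) (Fin n) ℝ)
    (y : EuclideanSpace ℝ (Fin m)) (hy : y ≠ 0)
    (Ω : Set (EuclideanSpace ℝ (Fin n))) (hbdd : Bornology.IsBounded Ω)
    (r : EuclideanSpace ℝ (Fin n) → ℝ)
    (hr : ∀ x, r x = ‖Matrix.toEuclideanLin Φ x‖ ^ 2 + ‖y‖ ^ 2)
    (s : EuclideanSpace ℝ (Fin n) → ℝ)
    (hs : ∀ x, s x = 1 - ‖Matrix.toEuclideanLin Φ x - y‖ ^ 2 / r x)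
    (f : ℝ → EuclideanSpace ℝ (Fin n) → EuclideanSpace ℝ (Fin n) → EuclideanSpace ℝ (Fin n))
    (hf : ∀ lam z x, f lam z x = s x • Matrix.toEuclideanLin (Φᵀ * Φ) x
        + (lam * r x) • x - (lam * r x) • z - Matrix.toEuclideanLin Φᵀ y)
    (Jf : ℝ → EuclideanSpace ℝ (Fin n) → EuclideanSpace ℝ (Fin n) →
      Matrix (Fin n) (Fin n) ℝ)
    (hJf : ∀ lam z x, Jf lam z x =
      LinearMap.toMatrix (EuclideanSpace.basisFun (Fin n) ℝ).toBasis
        (EuclideanSpace.basisFun (Fin n) ℝ).toBasis (fderiv ℝ (f lam z) x).toLinearMap) :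
    ∃ C₁ C₂ C₃ : ℝ, 0 < C₁ ∧ 0 < C₂ ∧ 0 < C₃ ∧
      ∀ lam : ℝ, 0 < lam → ∀ z : EuclideanSpace ℝ (Fin n), ∀ x ∈ Ω, ∀ w ∈ Ω,
        Real.sqrt (∑ i, ∑ j, (Jf lam z x i j - Jf lam z w i j) ^ 2)
          ≤ (C₁ * Real.sqrt (∑ i, ∑ j, ((Φᵀ * Φ) i j) ^ 2) + lam * (C₂ * ‖z‖ + C₃)) *
              ‖x - w‖ := by
  set A := LinearMap.toContinuousLinearMap (toEuclideanLin (Φᵀ * Φ))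
  set B := LinearMap.toContinuousLinearMap (toEuclideanLin Φ)
  have hr₂ : ContDiff ℝ 2 r := by
    rw [funext hr]; exact (B.contDiff.norm_sq ℝ).add contDiff_const
  have hs₂ : ContDiff ℝ 2 s := by
    rw [funext fun x => (hs x).trans (by rw [hr])]
    exact contDiff_const.sub (contDiff_norm_sub_sq_div_norm_sq_add_norm_sq B hy)
  have hf_eq : ∀ lam z, f lam z
      = fun u => A (s u • u) + lam • (r u • u - r u • z) - toEuclideanLin Φᵀ y := fun lam z =>
    funext fun u => by
      simp only [hf, A, LinearMap.coe_toContinuousLinearMap', map_smul, smul_sub, mul_smul,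
        add_sub_assoc]
  obtain ⟨K₁, K₂, K₃, hK⟩ := exists_norm_fderiv_comp_add_smul_sub_le (h := fun u => s u • u)
    (g := fun u => r u • u) A (toEuclideanLin Φᵀ y) (hs₂.smul contDiff_id) (hr₂.smul contDiff_id)
    hr₂ hbdd
  refine ⟨√n * K₁ + 1, √n * K₂ + 1, √n * K₃ + 1, by positivity, by positivity, by positivity, ?_⟩
  intro lam hlam z x hx w hw
  have hL := hK lam z x hx w hw
  rw [← hf_eq, abs_of_pos hlam] at hL
  calc √(∑ i, ∑ j, (Jf lam z x i j - Jf lam z w i j) ^ 2)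
      = √(∑ i, ∑ j, (Jf lam z x - Jf lam z w) i j ^ 2) := rfl
    _ ≤ √n * ‖fderiv ℝ (f lam z) x - fderiv ℝ (f lam z) w‖ := by
      have := sqrt_sum_sq_toMatrix_le (fderiv ℝ (f lam z) x - fderiv ℝ (f lam z) w)
      rwa [Fintype.card_fin, ContinuousLinearMap.toLinearMap_sub, map_sub, ← hJf, ← hJf] at this
    _ ≤ √n * ((‖A‖ * K₁ + lam * (K₂ * ‖z‖ + K₃)) * ‖x - w‖) := by gcongr
    _ = (√n * K₁ * ‖A‖ + lam * (√n * K₂ * ‖z‖ + √n * K₃)) * ‖x - w‖ := by ring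
    _ ≤ _ := by
      gcongr
      · exact le_add_of_nonneg_right zero_le_one
      · exact norm_toEuclideanLin_toContinuousLinearMap_le (Φᵀ * Φ)
      all_goals exact le_add_of_nonneg_right zero_le_one

/-- For `f(x) = [s(x)ΦᵀΦ + λ r(x) I]x - λ r(x) z - Φᵀy` (with `C = 0`,
`r(x) = ‖Φx‖² + ‖y‖²`, `s(x) = 2(Φx)ᵀy / r(x)`), the Jacobian `J_f` of `f` is Lipschitz
continuous on every bounded open convex set `Ω ⊂ ℝⁿ`: there exist constants
`C₁, C₂, C₃ > 0` depending only on `Φ`, `y` and `Ω` (not on `λ` or `z`) such that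
`‖J_f(x) - J_f(w)‖_F ≤ (C₁‖ΦᵀΦ‖_F + λ(C₂‖z‖ + C₃))‖x - w‖` for all `x, w ∈ Ω`. -/
theorem jacobian_lipschitz {m n : ℕ} (Φ : Matrix (Fin m) (Fin n) ℝ)
    (y : EuclideanSpace ℝ (Fin m)) (hy : y ≠ 0)
    (Ω : Set (EuclideanSpace ℝ (Fin n))) (hbdd : Bornology.IsBounded Ω)
    (hopen : IsOpen Ω) (hconv : Convex ℝ Ω)
    (r : EuclideanSpace ℝ (Fin n) → ℝ)
    (hr : ∀ x, r x = ‖Matrix.toEuclideanLin Φ x‖ ^ 2 + ‖y‖ ^ 2)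
    (s : EuclideanSpace ℝ (Fin n) → ℝ)
    (hs : ∀ x, s x = 1 - ‖Matrix.toEuclideanLin Φ x - y‖ ^ 2 / r x)
    (f : ℝ → EuclideanSpace ℝ (Fin n) → EuclideanSpace ℝ (Fin n) → EuclideanSpace ℝ (Fin n))
    (hf : ∀ lam z x, f lam z x = s x • Matrix.toEuclideanLin (Φᵀ * Φ) x
        + (lam * r x) • x - (lam * r x) • z - Matrix.toEuclideanLin Φᵀ y)
    (Jf : ℝ → EuclideanSpace ℝ (Fin n) → EuclideanSpace ℝ (Fin n) →
      Matrix (Fin n) (Fin n) ℝ)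
    (hJf : ∀ lam z x, Jf lam z x =
      LinearMap.toMatrix (EuclideanSpace.basisFun (Fin n) ℝ).toBasis
        (EuclideanSpace.basisFun (Fin n) ℝ).toBasis (fderiv ℝ (f lam z) x).toLinearMap) :
    ∃ C₁ C₂ C₃ : ℝ, 0 < C₁ ∧ 0 < C₂ ∧ 0 < C₃ ∧
      ∀ lam : ℝ, 0 < lam → ∀ z : EuclideanSpace ℝ (Fin n), ∀ x ∈ Ω, ∀ w ∈ Ω,
        Real.sqrt (∑ i, ∑ j, (Jf lam z x i j - Jf lam z w i j) ^ 2)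
          ≤ (C₁ * Real.sqrt (∑ i, ∑ j, ((Φᵀ * Φ) i j) ^ 2) + lam * (C₂ * ‖z‖ + C₃)) *
              ‖x - w‖ :=
  jacobian_lipschitz_general Φ y hy Ω hbdd r hr s hs f hf Jf hJf
end

section
/- Let Φ ∈ ℝ^{m×n}, y ∈ ℝᵐ with y ≠ 0, and α ∈ ℝ. For every x ∈ ℝⁿ, T(Φx, y) ≤ α if and only if φ_α(x) ≤ 0, where φ_α(x) = (1−α)‖Φx − y‖₂² − 2α xᵀΦᵀy. -/
open Matrix Finset

/-- For `Φ ∈ ℝ^{m×n}`, `y ∈ ℝᵐ` nonzero and `α ∈ ℝ`: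
`T(Φx, y) ≤ α ↔ φ_α(x) ≤ 0`, where `φ_α(x) = (1-α)‖Φx - y‖² - 2α xᵀΦᵀy`. -/
theorem T_le_iff_phi_nonpos {m n : ℕ} (Φ : Matrix (Fin m) (Fin n) ℝ) (y : Fin m → ℝ)
    (hy : y ≠ 0) (α : ℝ) (x : Fin n → ℝ) :
    (∑ i, (Φ.mulVec x i - y i) ^ 2) / ((∑ i, (Φ.mulVec x i) ^ 2) + ∑ i, y i ^ 2) ≤ α ↔
      (1 - α) * (∑ i, (Φ.mulVec x i - y i) ^ 2) - 2 * α * (∑ j, x j * Φᵀ.mulVec y j) ≤ 0 := by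
  set a : Fin m → ℝ := Φ.mulVec x with ha
  have hS : (∑ j, x j * Φᵀ.mulVec y j) = ∑ i, a i * y i := by
    simp only [ha, Matrix.mulVec, Matrix.transpose_apply, dotProduct, Finset.mul_sum,
      Finset.sum_mul]
    rw [Finset.sum_comm]
    apply Finset.sum_congr rfl
    intro i _
    apply Finset.sum_congr rfl
    intro j _
    ring
  have hypos : 0 < ∑ i, y i ^ 2 := by
    have : ∃ i, y i ≠ 0 := by
      by_contra h
      push_neg at h
      exact hy (funext h)
    obtain ⟨i, hi⟩ := this
    apply Finset.sum_pos' (fun j _ => sq_nonneg _)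
    exact ⟨i, Finset.mem_univ i, by positivity⟩
  have hD : 0 < (∑ i, a i ^ 2) + ∑ i, y i ^ 2 :=
    add_pos_of_nonneg_of_pos (Finset.sum_nonneg fun j _ => sq_nonneg _) hypos
  rw [div_le_iff₀ hD, hS]
  have key : (∑ i, (a i - y i) ^ 2) = (∑ i, a i ^ 2) + (∑ i, y i ^ 2) - 2 * ∑ i, a i * y i := by
    rw [← Finset.sum_add_distrib, Finset.mul_sum, ← Finset.sum_sub_distrib]
    apply Finset.sum_congr rfl
    intro i _
    ring
  have hexp : α * ((∑ i, a i ^ 2) + ∑ i, y i ^ 2)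
      = α * (∑ i, (a i - y i) ^ 2) + 2 * α * (∑ i, a i * y i) := by
    rw [key]; ring
  constructor <;> intro h <;> linarith [hexp]
end

section
/- Let Φ ∈ ℝ^{m×n}, y ∈ ℝᵐ with y ≠ 0, z ∈ ℝⁿ, λ > 0 and C ≥ 0, and let g(x) = T(Φx, y) + λ‖x − z‖₂². Then the gradient of g satisfies ∇g(x) = (2/r(x)) f(x) for all x ∈ ℝⁿ, where r(x) = ‖Φx‖₂² + ‖y‖₂² + C, s(x) = 1 − T(Φx,y), and f(x) = [s(x)ΦᵀΦ + λ r(x) I] x − λ r(x) z − Φᵀy. Consequently, x* is a critical point of g if and only if f(x*) = 0. -/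
/-!
By the quotient rule, with `∇‖Φx - y‖² = 2Φᵀ(Φx - y)` and `∇r = 2ΦᵀΦx`, the gradient of
`T(Φx, y) = ‖Φx - y‖² / r(x)` is `(2/r)(ΦᵀΦx - Φᵀy - T·ΦᵀΦx) = (2/r)(s·ΦᵀΦx - Φᵀy)`.
Writing the gradient `2λ(x - z)` of the penalty as `(2/r)·λr(x - z)` gives `∇g = (2/r) f`.
Since `r ≥ ‖y‖² > 0`, the factor `2/r` never vanishes, so the critical points of `g` are the
zeros of `f`.
-/

open Matrix

namespace HasGradientAt

variable {F : Type*} [NormedAddCommGroup F] [InnerProductSpace ℝ F] [CompleteSpace F]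
  {u v : F → ℝ} {u' v' x : F}

theorem add (hu : HasGradientAt u u' x) (hv : HasGradientAt v v' x) :
    HasGradientAt (fun x => u x + v x) (u' + v') x := by
  rw [hasGradientAt_iff_hasFDerivAt] at *
  rw [map_add]
  exact hu.add hv

theorem const_mul (c : ℝ) (hu : HasGradientAt u u' x) :
    HasGradientAt (fun x => c * u x) (c • u') x := by
  rw [hasGradientAt_iff_hasFDerivAt] at *
  simpa using hu.const_mul c

theorem div (hu : HasGradientAt u u' x) (hv : HasGradientAt v v' x) (hx : v x ≠ 0) :
    HasGradientAt (fun x => u x / v x) ((v x ^ 2)⁻¹ • (v x • u' - u x • v')) x := by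
  rw [hasGradientAt_iff_hasFDerivAt] at *
  have hinv := (hasDerivAt_inv hx).comp_hasFDerivAt x hv
  refine (hu.mul hinv).congr_fderiv ?_
  ext h
  simp only [neg_smul, smul_neg, Function.comp_apply, _root_.add_apply, _root_.neg_apply,
    _root_.smul_apply, InnerProductSpace.toDual_apply_apply, smul_eq_mul, map_smul, map_sub,
    _root_.sub_apply]
  field_simp
  ring

end HasGradientAt

section

variable {E F : Type*} [NormedAddCommGroup E] [InnerProductSpace ℝ E] [CompleteSpace E]
  [NormedAddCommGroup F] [InnerProductSpace ℝ F] [CompleteSpace F]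

open ContinuousLinearMap
open scoped InnerProduct

theorem hasGradientAt_norm_sub_sq (A : E →L[ℝ] F) (y : F) (x : E) :
    HasGradientAt (fun x => ‖A x - y‖ ^ 2) ((2 : ℝ) • (A†) (A x - y)) x := by
  rw [hasGradientAt_iff_hasFDerivAt]
  refine (A.hasFDerivAt.sub_const y).norm_sq.congr_fderiv ?_
  ext h
  simp [adjoint_inner_left]

theorem hasGradientAt_norm_sub_sq_div (A : E →L[ℝ] F) (y : F) (c : ℝ) {x : E}
    (hx : ‖A x‖ ^ 2 + c ≠ 0) :
    HasGradientAt (fun x => ‖A x - y‖ ^ 2 / (‖A x‖ ^ 2 + c))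
      ((2 / (‖A x‖ ^ 2 + c)) •
        ((1 - ‖A x - y‖ ^ 2 / (‖A x‖ ^ 2 + c)) • (A†) (A x) - (A†) y)) x := by
  have hr : HasGradientAt (fun x => ‖A x‖ ^ 2 + c) ((2 : ℝ) • (A†) (A x)) x := by
    simpa using (hasGradientAt_norm_sub_sq A 0 x).add (hasGradientAt_const x c)
  convert (hasGradientAt_norm_sub_sq A y x).div hr hx using 1
  rw [map_sub]
  match_scalars <;> field_simp

end

theorem gradient_eq_two_div_r_smul_f_general {m n : ℕ} (Φ : Matrix (Fin m) (Fin n) ℝ)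
    (y : EuclideanSpace ℝ (Fin m)) (hy : y ≠ 0) (z : EuclideanSpace ℝ (Fin n))
    (lam C : ℝ) (hC : 0 ≤ C)
    (r : EuclideanSpace ℝ (Fin n) → ℝ)
    (hr : ∀ x, r x = ‖Matrix.toEuclideanLin Φ x‖ ^ 2 + ‖y‖ ^ 2 + C)
    (s : EuclideanSpace ℝ (Fin n) → ℝ)
    (hs : ∀ x, s x = 1 - ‖Matrix.toEuclideanLin Φ x - y‖ ^ 2 / r x)
    (f : EuclideanSpace ℝ (Fin n) → EuclideanSpace ℝ (Fin n))
    (hf : ∀ x, f x = s x • Matrix.toEuclideanLin (Φᵀ * Φ) x + (lam * r x) • x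
        - (lam * r x) • z - Matrix.toEuclideanLin Φᵀ y)
    (g : EuclideanSpace ℝ (Fin n) → ℝ)
    (hg : ∀ x, g x = ‖Matrix.toEuclideanLin Φ x - y‖ ^ 2 / r x + lam * ‖x - z‖ ^ 2) :
    (∀ x, gradient g x = (2 / r x) • f x) ∧
      (∀ x, gradient g x = 0 ↔ f x = 0) := by
  set A := (Matrix.toEuclideanLin Φ).toContinuousLinearMap
  have hAx : ⇑(toEuclideanLin Φ) = A := rfl
  rw [hAx] at hr hs hg
  have hA : ∀ w, (ContinuousLinearMap.adjoint A) w = Matrix.toEuclideanLin Φᵀ w := by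
    intro w
    rw [← conjTranspose_eq_transpose_of_trivial, toEuclideanLin_conjTranspose_eq_adjoint]
    rfl
  have hΦTΦ : ∀ x, toEuclideanLin (Φᵀ * Φ) x = toEuclideanLin Φᵀ (A x) := fun x => by
    simp [A, toLpLin_apply, mulVec_mulVec]
  have hr_pos : ∀ x, 0 < r x := fun x => by
    rw [hr]; positivity
  have hgrad : ∀ x, HasGradientAt g ((2 / r x) • f x) x := by
    intro x
    have hrx : r x = ‖A x‖ ^ 2 + (‖y‖ ^ 2 + C) := by rw [hr, add_assoc]
    have hg' : g = fun x => ‖A x - y‖ ^ 2 / (‖A x‖ ^ 2 + (‖y‖ ^ 2 + C)) + lam * ‖x - z‖ ^ 2 := by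
      funext x; rw [hg, hr, add_assoc]
    have hdist : HasGradientAt (fun x => ‖x - z‖ ^ 2) ((2 : ℝ) • (x - z)) x := by
      simpa [ContinuousLinearMap.adjoint_id] using hasGradientAt_norm_sub_sq (.id ℝ _) z x
    rw [hg']
    convert (hasGradientAt_norm_sub_sq_div A y _ (hrx ▸ (hr_pos x).ne')).add
      (hdist.const_mul lam) using 1
    rw [hf, hs, hΦTΦ, ← hA, ← hA, hrx]
    match_scalars <;> field_simp
  refine ⟨fun x => (hgrad x).gradient, fun x => ?_⟩
  rw [(hgrad x).gradient, smul_eq_zero]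
  simp [(hr_pos x).ne']

/-- For `g(x) = T(Φx,y) + λ‖x-z‖²`, the gradient satisfies `∇g(x) = (2/r(x)) f(x)`,
where `r(x) = ‖Φx‖² + ‖y‖² + C`, `s(x) = 1 - T(Φx,y)` and
`f(x) = [s(x)ΦᵀΦ + λ r(x) I]x - λ r(x) z - Φᵀy`; consequently `x*` is a critical
point of `g` iff `f(x*) = 0`. -/
theorem gradient_eq_two_div_r_smul_f {m n : ℕ} (Φ : Matrix (Fin m) (Fin n) ℝ)
    (y : EuclideanSpace ℝ (Fin m)) (hy : y ≠ 0) (z : EuclideanSpace ℝ (Fin n))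
    (lam C : ℝ) (hlam : 0 < lam) (hC : 0 ≤ C)
    (r : EuclideanSpace ℝ (Fin n) → ℝ)
    (hr : ∀ x, r x = ‖Matrix.toEuclideanLin Φ x‖ ^ 2 + ‖y‖ ^ 2 + C)
    (s : EuclideanSpace ℝ (Fin n) → ℝ)
    (hs : ∀ x, s x = 1 - ‖Matrix.toEuclideanLin Φ x - y‖ ^ 2 / r x)
    (f : EuclideanSpace ℝ (Fin n) → EuclideanSpace ℝ (Fin n))
    (hf : ∀ x, f x = s x • Matrix.toEuclideanLin (Φᵀ * Φ) x + (lam * r x) • x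
        - (lam * r x) • z - Matrix.toEuclideanLin Φᵀ y)
    (g : EuclideanSpace ℝ (Fin n) → ℝ)
    (hg : ∀ x, g x = ‖Matrix.toEuclideanLin Φ x - y‖ ^ 2 / r x + lam * ‖x - z‖ ^ 2) :
    (∀ x, gradient g x = (2 / r x) • f x) ∧
      (∀ x, gradient g x = 0 ↔ f x = 0) :=
  gradient_eq_two_div_r_smul_f_general Φ y hy z lam C hC r hr s hs f hf g hg
end

section
/- Let Φ ∈ ℝ^{m×n} and y ∈ ℝᵐ with y ≠ 0, and define s(x) = 2(Φx)ᵀy / (‖Φx‖₂² + ‖y‖₂²). Then for every v ∈ ℝⁿ, the gradient of s satisfies ‖∇s(v)‖₂ ≤ (√2 + 1) ‖Φ‖₂ / ‖y‖₂, where ‖Φ‖₂ is the spectral (operator) norm of Φ. -/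
/-!
By the quotient rule, with `t = ‖Φv‖`, `a = ‖y‖` and `D = t² + a²`,
`∇s(v) = 2 (D Φᵀy - 2⟪Φv, y⟫ ΦᵀΦv) / D²`, so Cauchy–Schwarz gives
`‖∇s(v)‖ ≤ 2‖Φ‖ a (a² + 3t²) / (t² + a²)²`.
This is at most `9‖Φ‖ / (4a)` because `9(t² + a²)² - 8a²(a² + 3t²) = (a² - 3t²)²`,
and `9/4 < √2 + 1`.
-/

open scoped InnerProductSpace

theorem HasFDerivAt.div {𝕜 E : Type*} [NontriviallyNormedField 𝕜] [NormedAddCommGroup E]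
    [NormedSpace 𝕜 E] {c d : E → 𝕜} {c' d' : E →L[𝕜] 𝕜} {x : E} (hc : HasFDerivAt c c' x)
    (hd : HasFDerivAt d d' x) (hx : d x ≠ 0) :
    HasFDerivAt (fun y => c y / d y) ((d x ^ 2)⁻¹ • (d x • c' - c x • d')) x := by
  simp only [div_eq_mul_inv]
  refine (hc.mul ((hasDerivAt_inv hx).comp_hasFDerivAt x hd)).congr_fderiv
    (ContinuousLinearMap.ext fun h => ?_)
  simp only [add_apply, smul_apply, sub_apply, Function.comp_apply, smul_eq_mul]
  field_simp
  ring

theorem two_mul_mul_add_three_mul_sq_div_le (a t : ℝ) (ha : 0 < a) :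
    2 * a * (a ^ 2 + 3 * t ^ 2) / (t ^ 2 + a ^ 2) ^ 2 ≤ 9 / 4 / a := by
  rw [div_le_div_iff₀ (by positivity) ha]
  nlinarith [sq_nonneg (a ^ 2 - 3 * t ^ 2)]

section

variable {E F : Type*} [NormedAddCommGroup E] [InnerProductSpace ℝ E]
  [NormedAddCommGroup F] [InnerProductSpace ℝ F]

theorem norm_innerSL_comp_le (w : F) (A : E →L[ℝ] F) :
    ‖(innerSL ℝ w).comp A‖ ≤ ‖w‖ * ‖A‖ :=
  (ContinuousLinearMap.opNorm_comp_le _ _).trans_eq (by rw [innerSL_apply_norm])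

theorem norm_fderiv_inner_div_le (A : E →L[ℝ] F) {y : F} (hy : y ≠ 0) (v : E) :
    ‖fderiv ℝ (fun x => 2 * ⟪A x, y⟫_ℝ / (‖A x‖ ^ 2 + ‖y‖ ^ 2)) v‖
      ≤ ‖A‖ * (2 * ‖y‖ * (‖y‖ ^ 2 + 3 * ‖A v‖ ^ 2) / (‖A v‖ ^ 2 + ‖y‖ ^ 2) ^ 2) := by
  set D := ‖A v‖ ^ 2 + ‖y‖ ^ 2
  have hD : 0 < D := by positivity
  have hnum : HasFDerivAt (fun x => 2 * ⟪A x, y⟫_ℝ) ((2 : ℝ) • (innerSL ℝ y).comp A) v := by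
    simpa [real_inner_comm] using ((innerSL ℝ y).comp A).hasFDerivAt.const_mul (2 : ℝ)
  have hden : HasFDerivAt (fun x => ‖A x‖ ^ 2 + ‖y‖ ^ 2)
      ((2 : ℝ) • (innerSL ℝ (A v)).comp A) v := by
    rw [ofNat_smul_eq_nsmul ℝ 2]
    exact A.hasFDerivAt.norm_sq.add_const _
  have hvalue : |2 * ⟪A v, y⟫_ℝ| ≤ 2 * (‖A v‖ * ‖y‖) := by
    rw [abs_mul, abs_two]
    gcongr
    exact abs_real_inner_le_norm _ _
  rw [(hnum.div hden hD.ne').fderiv, norm_smul, Real.norm_of_nonneg (by positivity)]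
  calc _ ≤ (D ^ 2)⁻¹ * (D * (2 * (‖y‖ * ‖A‖)) + 2 * (‖A v‖ * ‖y‖) * (2 * (‖A v‖ * ‖A‖))) := by
        gcongr
        refine (norm_sub_le _ _).trans (add_le_add ?_ ?_) <;> rw [norm_smul, norm_smul]
        · rw [Real.norm_of_nonneg hD.le, Real.norm_two]
          gcongr
          exact norm_innerSL_comp_le y A
        · rw [Real.norm_eq_abs, Real.norm_two]
          gcongr
          exact norm_innerSL_comp_le (A v) A
    _ = _ := by
        field_simp
        ring

theorem norm_gradient_inner_div_le [CompleteSpace E] (A : E →L[ℝ] F) {y : F} (hy : y ≠ 0)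
    (v : E) :
    ‖gradient (fun x => 2 * ⟪A x, y⟫_ℝ / (‖A x‖ ^ 2 + ‖y‖ ^ 2)) v‖ ≤ 9 / 4 * ‖A‖ / ‖y‖ := by
  rw [gradient, LinearIsometryEquiv.norm_map]
  calc _ ≤ _ := norm_fderiv_inner_div_le A hy v
    _ ≤ ‖A‖ * (9 / 4 / ‖y‖) := mul_le_mul_of_nonneg_left
        (two_mul_mul_add_three_mul_sq_div_le _ _ (norm_pos_iff.mpr hy)) (norm_nonneg A)
    _ = 9 / 4 * ‖A‖ / ‖y‖ := by ring

end

/-- For `s(x) = 2(Φx)ᵀy/(‖Φx‖² + ‖y‖²)` with `y ≠ 0`, the gradient of `s` satisfies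
`‖∇s(v)‖ ≤ (√2 + 1)‖Φ‖₂/‖y‖` for every `v`, where `‖Φ‖₂` is the spectral norm. -/
theorem grad_s_bound {m n : ℕ} (Φ : Matrix (Fin m) (Fin n) ℝ)
    (y : EuclideanSpace ℝ (Fin m)) (hy : y ≠ 0) (v : EuclideanSpace ℝ (Fin n)) :
    ‖gradient (fun x : EuclideanSpace ℝ (Fin n) =>
        2 * ⟪Matrix.toEuclideanLin Φ x, y⟫_ℝ / (‖Matrix.toEuclideanLin Φ x‖ ^ 2 + ‖y‖ ^ 2)) v‖
      ≤ (Real.sqrt 2 + 1) * ‖(Matrix.toEuclideanLin Φ).toContinuousLinearMap‖ / ‖y‖ := by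
  have hconst : (9 / 4 : ℝ) ≤ Real.sqrt 2 + 1 := by
    nlinarith [Real.sq_sqrt (zero_le_two : (0 : ℝ) ≤ 2), Real.sqrt_nonneg 2]
  refine (norm_gradient_inner_div_le (Matrix.toEuclideanLin Φ).toContinuousLinearMap hy v).trans ?_
  gcongr
end

section
/- Let Φ ∈ ℝ^{m×n} and y ∈ ℝᵐ with y ≠ 0, and define s(x) = 2(Φx)ᵀy / (‖Φx‖₂² + ‖y‖₂²). Then s is globally Lipschitz continuous on ℝⁿ with Lipschitz constant K₂ = (√2 + 1) ‖Φ‖₂ / ‖y‖₂; that is, |s(x) − s(w)| ≤ K₂ ‖x − w‖₂ for all x, w ∈ ℝⁿ. -/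
open Matrix
open scoped InnerProductSpace


lemma poly_ineq (s t b : ℝ) (hs : 0 ≤ s) (ht : 0 ≤ t) (hb : 0 < b) :
    2 * b^2 * (b^2 + 3*s*t) ≤ (Real.sqrt 2 + 1) * ((s^2+b^2) * (t^2+b^2)) := by
  have hr : Real.sqrt 2 * Real.sqrt 2 = 2 := Real.mul_self_sqrt (by norm_num)
  have hr0 : (0:ℝ) ≤ Real.sqrt 2 := Real.sqrt_nonneg 2
  have hr54 : (5:ℝ)/4 ≤ Real.sqrt 2 := by nlinarith [hr, hr0]
  nlinarith [mul_nonneg (mul_pos hb hb).le (sq_nonneg (s-t)),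
    sq_nonneg ((1 + Real.sqrt 2)*(s*t) + (Real.sqrt 2 - 2)*b^2),
    mul_nonneg (pow_pos hb 4).le (by linarith : (0:ℝ) ≤ 4*Real.sqrt 2 - 5),
    mul_nonneg hs ht, mul_pos hb hb]

lemma key {E : Type*} [NormedAddCommGroup E] [InnerProductSpace ℝ E]
    (u v y : E) (hy : y ≠ 0) :
    |2 * ⟪u, y⟫_ℝ / (‖u‖^2 + ‖y‖^2) - 2 * ⟪v, y⟫_ℝ / (‖v‖^2 + ‖y‖^2)|
      ≤ (Real.sqrt 2 + 1) / ‖y‖ * ‖u - v‖ := by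
  have hb : 0 < ‖y‖ := norm_pos_iff.mpr hy
  have hDu : 0 < ‖u‖^2 + ‖y‖^2 := by positivity
  have hDv : 0 < ‖v‖^2 + ‖y‖^2 := by positivity
  rw [div_sub_div _ _ (ne_of_gt hDu) (ne_of_gt hDv), abs_div,
    abs_of_pos (mul_pos hDu hDv), div_le_iff₀ (mul_pos hDu hDv)]
  have hCS1 : |⟪u - v, y⟫_ℝ| ≤ ‖u - v‖ * ‖y‖ := abs_real_inner_le_norm _ _
  have hCS2 : |⟪u, y⟫_ℝ| ≤ ‖u‖ * ‖y‖ := abs_real_inner_le_norm _ _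
  have hCS3 : |⟪v, y⟫_ℝ| ≤ ‖v‖ * ‖y‖ := abs_real_inner_le_norm _ _
  have hts : |‖v‖ - ‖u‖| ≤ ‖u - v‖ := by
    rw [abs_sub_comm]; exact abs_norm_sub_norm_le u v
  have hsub : ⟪u - v, y⟫_ℝ = ⟪u,y⟫_ℝ - ⟪v,y⟫_ℝ := inner_sub_left _ _ _
  have hid : 2*⟪u,y⟫_ℝ * (‖v‖^2+‖y‖^2) - (‖u‖^2+‖y‖^2) * (2*⟪v,y⟫_ℝ)
      = 2 * (‖y‖^2 * ⟪u-v,y⟫_ℝ + ⟪u,y⟫_ℝ * ‖v‖ * (‖v‖ - ‖u‖)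
          + ‖u‖*‖v‖*⟪u-v,y⟫_ℝ + ⟪v,y⟫_ℝ * ‖u‖ * (‖v‖-‖u‖)) := by
    rw [hsub]; ring
  have hnum : |2*⟪u,y⟫_ℝ * (‖v‖^2+‖y‖^2) - (‖u‖^2+‖y‖^2) * (2*⟪v,y⟫_ℝ)|
      ≤ 2 * ‖y‖ * (‖y‖^2 + 3*‖u‖*‖v‖) * ‖u-v‖ := by
    rw [hid, abs_mul, abs_two]
    have h4 : |‖y‖^2 * ⟪u-v,y⟫_ℝ + ⟪u,y⟫_ℝ * ‖v‖ * (‖v‖ - ‖u‖)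
          + ‖u‖*‖v‖*⟪u-v,y⟫_ℝ + ⟪v,y⟫_ℝ * ‖u‖ * (‖v‖-‖u‖)|
        ≤ ‖y‖^2 * (‖u-v‖*‖y‖) + (‖u‖*‖y‖) * ‖v‖ * ‖u-v‖
          + ‖u‖*‖v‖*(‖u-v‖*‖y‖) + (‖v‖*‖y‖) * ‖u‖ * ‖u-v‖ := by
      have t1 : |‖y‖^2 * ⟪u-v,y⟫_ℝ| ≤ ‖y‖^2 * (‖u-v‖*‖y‖) := by
        rw [abs_mul, abs_of_nonneg (sq_nonneg ‖y‖)]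
        exact mul_le_mul_of_nonneg_left hCS1 (sq_nonneg _)
      have t2 : |⟪u,y⟫_ℝ * ‖v‖ * (‖v‖ - ‖u‖)| ≤ (‖u‖*‖y‖) * ‖v‖ * ‖u-v‖ := by
        rw [abs_mul, abs_mul, abs_of_nonneg (norm_nonneg v)]
        gcongr
      have t3 : |‖u‖*‖v‖*⟪u-v,y⟫_ℝ| ≤ ‖u‖*‖v‖*(‖u-v‖*‖y‖) := by
        rw [abs_mul, abs_mul, abs_of_nonneg (norm_nonneg u), abs_of_nonneg (norm_nonneg v)]
        gcongr
      have t4 : |⟪v,y⟫_ℝ * ‖u‖ * (‖v‖ - ‖u‖)| ≤ (‖v‖*‖y‖) * ‖u‖ * ‖u-v‖ := by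
        rw [abs_mul, abs_mul, abs_of_nonneg (norm_nonneg u)]
        gcongr
      calc |‖y‖^2 * ⟪u-v,y⟫_ℝ + ⟪u,y⟫_ℝ * ‖v‖ * (‖v‖ - ‖u‖)
          + ‖u‖*‖v‖*⟪u-v,y⟫_ℝ + ⟪v,y⟫_ℝ * ‖u‖ * (‖v‖-‖u‖)|
          ≤ |‖y‖^2 * ⟪u-v,y⟫_ℝ + ⟪u,y⟫_ℝ * ‖v‖ * (‖v‖ - ‖u‖)
          + ‖u‖*‖v‖*⟪u-v,y⟫_ℝ| + |⟪v,y⟫_ℝ * ‖u‖ * (‖v‖-‖u‖)| := abs_add_le _ _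
        _ ≤ |‖y‖^2 * ⟪u-v,y⟫_ℝ + ⟪u,y⟫_ℝ * ‖v‖ * (‖v‖ - ‖u‖)|
          + |‖u‖*‖v‖*⟪u-v,y⟫_ℝ| + |⟪v,y⟫_ℝ * ‖u‖ * (‖v‖-‖u‖)| := by
            gcongr; exact abs_add_le _ _
        _ ≤ |‖y‖^2 * ⟪u-v,y⟫_ℝ| + |⟪u,y⟫_ℝ * ‖v‖ * (‖v‖ - ‖u‖)|
          + |‖u‖*‖v‖*⟪u-v,y⟫_ℝ| + |⟪v,y⟫_ℝ * ‖u‖ * (‖v‖-‖u‖)| := by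
            gcongr; exact abs_add_le _ _
        _ ≤ _ := by gcongr
    nlinarith [h4, abs_nonneg (‖y‖^2 * ⟪u-v,y⟫_ℝ + ⟪u,y⟫_ℝ * ‖v‖ * (‖v‖ - ‖u‖)
          + ‖u‖*‖v‖*⟪u-v,y⟫_ℝ + ⟪v,y⟫_ℝ * ‖u‖ * (‖v‖-‖u‖))]
  have hpoly := poly_ineq ‖u‖ ‖v‖ ‖y‖ (norm_nonneg u) (norm_nonneg v) hb
  rw [div_mul_eq_mul_div, div_mul_eq_mul_div, le_div_iff₀ hb]
  nlinarith [mul_le_mul_of_nonneg_right hnum hb.le,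
    mul_le_mul_of_nonneg_right hpoly (norm_nonneg (u-v)), norm_nonneg (u-v), hb]

/-- `s(x) = 2(Φx)ᵀy/(‖Φx‖² + ‖y‖²)` (with `y ≠ 0`) is globally Lipschitz with constant
`K₂ = (√2 + 1)‖Φ‖₂/‖y‖`, where `‖Φ‖₂` is the spectral norm. -/
theorem s_lipschitz {m n : ℕ} (Φ : Matrix (Fin m) (Fin n) ℝ)
    (y : EuclideanSpace ℝ (Fin m)) (hy : y ≠ 0) (x w : EuclideanSpace ℝ (Fin n)) :
    |2 * ⟪Matrix.toEuclideanLin Φ x, y⟫_ℝ / (‖Matrix.toEuclideanLin Φ x‖ ^ 2 + ‖y‖ ^ 2) -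
        2 * ⟪Matrix.toEuclideanLin Φ w, y⟫_ℝ / (‖Matrix.toEuclideanLin Φ w‖ ^ 2 + ‖y‖ ^ 2)|
      ≤ (Real.sqrt 2 + 1) * ‖(Matrix.toEuclideanLin Φ).toContinuousLinearMap‖ / ‖y‖ *
          ‖x - w‖ := by
  have hb : 0 < ‖y‖ := norm_pos_iff.mpr hy
  have h1 := key (Matrix.toEuclideanLin Φ x) (Matrix.toEuclideanLin Φ w) y hy
  have h2 : ‖Matrix.toEuclideanLin Φ x - Matrix.toEuclideanLin Φ w‖
      ≤ ‖(Matrix.toEuclideanLin Φ).toContinuousLinearMap‖ * ‖x - w‖ := by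
    have := ((Matrix.toEuclideanLin Φ).toContinuousLinearMap).le_opNorm (x - w)
    rw [LinearMap.coe_toContinuousLinearMap', map_sub] at this
    exact this
  have hc : 0 ≤ (Real.sqrt 2 + 1) / ‖y‖ := by positivity
  calc |2 * ⟪Matrix.toEuclideanLin Φ x, y⟫_ℝ / (‖Matrix.toEuclideanLin Φ x‖ ^ 2 + ‖y‖ ^ 2) -
        2 * ⟪Matrix.toEuclideanLin Φ w, y⟫_ℝ / (‖Matrix.toEuclideanLin Φ w‖ ^ 2 + ‖y‖ ^ 2)|
      ≤ (Real.sqrt 2 + 1) / ‖y‖ * ‖Matrix.toEuclideanLin Φ x - Matrix.toEuclideanLin Φ w‖ := h1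
    _ ≤ (Real.sqrt 2 + 1) / ‖y‖ *
        (‖(Matrix.toEuclideanLin Φ).toContinuousLinearMap‖ * ‖x - w‖) :=
      mul_le_mul_of_nonneg_left h2 hc
    _ = (Real.sqrt 2 + 1) * ‖(Matrix.toEuclideanLin Φ).toContinuousLinearMap‖ / ‖y‖ *
        ‖x - w‖ := by ring
end
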